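/- Suppose λ > 0 is such that the allocation A*_k := min{1, λ/√(φ_k)} satisfies the budget equality Σ_{k=1}^{n} A*_k·ψ_k = B. Then A* is feasible (in particular, A*_k is non-increasing in k and 0 < A*_k ≤ 1), and A* minimizes the objective Σ_{k=1}^{n} 1/A_k over all feasible allocations: for every feasible A, Σ_{k=1}^{n} 1/A*_k ≤ Σ_{k=1}^{n} 1/A_k. -/

import Mathlib

/-- Virtual cost of the uniform distribution over `{c 1, …, c n}`:
`ψ k = k·c k − (k−1)·c (k−1)`. -/
noncomputable def vc (c : ℕ → ℝ) (i : ℕ) : ℝ :=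
  (i : ℝ) * c i - ((i : ℝ) - 1) * c (i - 1)

/-- `Avg(i,k) = (1/(k−i+1))·Σ_{j=i}^{k} ψ_j`. -/
noncomputable def avg (c : ℕ → ℝ) (i k : ℕ) : ℝ :=
  (∑ j ∈ Finset.Icc i k, vc c j) / ((k : ℝ) - (i : ℝ) + 1)

/-- `ψ'_i = min_{i ≤ k ≤ n} Avg(i,k)`. -/
noncomputable def rvcAux (n : ℕ) (c : ℕ → ℝ) (i : ℕ) : ℝ :=
  sInf {x | ∃ k, i ≤ k ∧ k ≤ n ∧ x = avg c i k}

/-- Regularized virtual cost: `φ_i = max_{1 ≤ j ≤ i} ψ'_j`. -/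
noncomputable def rvc (n : ℕ) (c : ℕ → ℝ) (i : ℕ) : ℝ :=
  sSup {x | ∃ j, 1 ≤ j ∧ j ≤ i ∧ x = rvcAux n c j}

/-- An allocation `A` is feasible: `0 < A_k ≤ 1`, non-increasing, and the
expected virtual cost is within the budget `B`. -/
def Feasible (n : ℕ) (c : ℕ → ℝ) (B : ℝ) (A : ℕ → ℝ) : Prop :=
  (∀ k, 1 ≤ k → k ≤ n → 0 < A k ∧ A k ≤ 1) ∧
    (∀ k, 1 ≤ k → k < n → A (k + 1) ≤ A k) ∧
    ∑ k ∈ Finset.Icc 1 n, A k * vc c k ≤ B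

/-! Summation by parts against the partial sums of `ψ - φ` turns the budget of a non-increasing
allocation into `∑ A_k φ_k ≤ ∑ A_k ψ_k`, because the partial sums of `φ` stay below those of `ψ`
and meet them at `n`; for `A*` this is an equality, since `φ_{k+1} = φ_k` (hence
`A*_{k+1} = A*_k`) wherever the inequality between partial sums is strict. These partial-sum
facts follow by strong induction on `k`, splitting `[1, k]` at the first index `p + 1` where
`ψ'` attains its maximum on `[1, k]`: `φ` equals `ψ'_{p+1}` on `(p, k]`.

With the budget measured in `φ`, `A*` minimizes the Lagrangian `∑ (1 / A_k + A_k φ_k / λ²)`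
term by term, and `∑ A_k φ_k ≤ B = ∑ A*_k φ_k` gives the claim. -/

lemma Finset.sum_Icc_one_by_parts (A d : ℕ → ℝ) (N : ℕ) :
    ∑ k ∈ Icc 1 N, A k * d k =
      ∑ k ∈ Icc 1 N, (A k - A (k + 1)) * ∑ j ∈ Ioc 0 k, d j + A (N + 1) * ∑ j ∈ Ioc 0 N, d j := by
  induction N with
  | zero => simp
  | succ N ih =>
    rw [sum_Icc_succ_top (by omega), sum_Icc_succ_top (by omega), ih,
      sum_Ioc_succ_top (Nat.zero_le N)]
    ring

lemma isMinOn_one_div_add_mul_div_sq {lam phi : ℝ} (hlam : 0 < lam) (hphi : 0 < phi) :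
    IsMinOn (fun a => 1 / a + a * phi / lam ^ 2) (Set.Ioc 0 1) (min 1 (lam / Real.sqrt phi)) := by
  rw [isMinOn_iff]
  rintro a ⟨ha0, ha1⟩
  obtain ⟨s, hs, rfl⟩ : ∃ s, 0 < s ∧ phi = s ^ 2 :=
    ⟨_, Real.sqrt_pos.2 hphi, (Real.sq_sqrt hphi.le).symm⟩
  rw [Real.sqrt_sq hs.le]
  rcases le_total (lam / s) 1 with hle | hge
  · rw [min_eq_right hle]
    have key : 1 / a + a * s ^ 2 / lam ^ 2 - (1 / (lam / s) + lam / s * s ^ 2 / lam ^ 2) =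
        (lam - a * s) ^ 2 / (a * lam ^ 2) := by
      field_simp
      ring
    have : 0 ≤ (lam - a * s) ^ 2 / (a * lam ^ 2) := by positivity
    linarith
  · rw [min_eq_left hge]
    have hsl : s ≤ lam := by rwa [one_le_div hs] at hge
    have key : 1 / a + a * s ^ 2 / lam ^ 2 - (1 / 1 + 1 * s ^ 2 / lam ^ 2) =
        (1 - a) * (lam ^ 2 - a * s ^ 2) / (a * lam ^ 2) := by
      field_simp
      ring
    have : 0 ≤ (1 - a) * (lam ^ 2 - a * s ^ 2) / (a * lam ^ 2) := by
      have : a * s ^ 2 ≤ lam ^ 2 := by nlinarith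
      apply div_nonneg (mul_nonneg (by linarith) (by linarith)) (by positivity)
    linarith

namespace RegularizedVirtualCost

open Finset

variable {n : ℕ} {c : ℕ → ℝ}

lemma sum_Ioc_vc {p r : ℕ} (h : p ≤ r) :
    ∑ j ∈ Ioc p r, vc c j = r * c r - p * c p := by
  induction r, h using Nat.le_induction with
  | base => simp
  | succ r hr ih =>
    rw [sum_Ioc_succ_top hr, ih, vc]
    push_cast
    simp only [add_sub_cancel_right]
    ring

lemma avg_succ (p r : ℕ) : avg c (p + 1) r = (∑ j ∈ Ioc p r, vc c j) / ((r : ℝ) - p) := by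
  rw [avg, ← Icc_add_one_left_eq_Ioc]
  push_cast
  ring_nf

lemma avg_one {r : ℕ} (hr : 1 ≤ r) : avg c 1 r = c r := by
  have hr' : (r : ℝ) ≠ 0 := by positivity
  rw [avg_succ, sum_Ioc_vc (Nat.zero_le r)]
  simp [hr']

lemma avgSet_eq (n : ℕ) (c : ℕ → ℝ) (i : ℕ) :
    {x | ∃ k, i ≤ k ∧ k ≤ n ∧ x = avg c i k} = ((Icc i n).image (avg c i) : Set ℝ) := by
  ext x
  simp [eq_comm, and_assoc]

lemma rvcAuxSet_eq (n : ℕ) (c : ℕ → ℝ) (i : ℕ) :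
    {x | ∃ j, 1 ≤ j ∧ j ≤ i ∧ x = rvcAux n c j} = ((Icc 1 i).image (rvcAux n c) : Set ℝ) := by
  ext x
  simp [eq_comm, and_assoc]

lemma rvcAux_le_avg {i k : ℕ} (hik : i ≤ k) (hkn : k ≤ n) : rvcAux n c i ≤ avg c i k :=
  csInf_le (avgSet_eq n c i ▸ (Set.toFinite _).bddBelow) ⟨k, hik, hkn, rfl⟩

lemma exists_rvcAux_eq_avg {i : ℕ} (hin : i ≤ n) :
    ∃ k, i ≤ k ∧ k ≤ n ∧ rvcAux n c i = avg c i k := by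
  have hne : {x | ∃ k, i ≤ k ∧ k ≤ n ∧ x = avg c i k}.Nonempty := ⟨_, i, le_rfl, hin, rfl⟩
  exact hne.csInf_mem (avgSet_eq n c i ▸ Set.toFinite _)

lemma rvcAux_le_rvc {j k : ℕ} (hj : 1 ≤ j) (hjk : j ≤ k) : rvcAux n c j ≤ rvc n c k :=
  le_csSup (rvcAuxSet_eq n c k ▸ (Set.toFinite _).bddAbove) ⟨j, hj, hjk, rfl⟩

lemma rvc_le {k : ℕ} {x : ℝ} (hk : 1 ≤ k) (h : ∀ j, 1 ≤ j → j ≤ k → rvcAux n c j ≤ x) :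
    rvc n c k ≤ x := by
  refine csSup_le ⟨_, 1, le_rfl, hk, rfl⟩ ?_
  rintro _ ⟨j, hj, hjk, rfl⟩
  exact h j hj hjk

lemma rvc_mono {k k' : ℕ} (hk : 1 ≤ k) (hkk' : k ≤ k') : rvc n c k ≤ rvc n c k' :=
  rvc_le hk fun _ hj hjk => rvcAux_le_rvc hj (hjk.trans hkk')

lemma rvc_pos (hc1 : 0 < c 1) (hc : ∀ r, 1 ≤ r → r ≤ n → c 1 ≤ c r) {k : ℕ} (hk : 1 ≤ k)
    (hkn : k ≤ n) : 0 < rvc n c k := by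
  obtain ⟨r, hr, hrn, heq⟩ := exists_rvcAux_eq_avg (c := c) (le_trans hk hkn)
  calc 0 < c 1 := hc1
    _ ≤ c r := hc r hr hrn
    _ = rvcAux n c 1 := by rw [heq, avg_one hr]
    _ ≤ rvc n c k := rvcAux_le_rvc le_rfl hk

lemma feasible_min_one_div_sqrt_rvc {B lam : ℝ} {A : ℕ → ℝ} (hc1 : 0 < c 1)
    (hc : ∀ r, 1 ≤ r → r ≤ n → c 1 ≤ c r) (hlam : 0 < lam)
    (hA : ∀ k, 1 ≤ k → k ≤ n → A k = min 1 (lam / Real.sqrt (rvc n c k)))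
    (hB : ∑ k ∈ Icc 1 n, A k * vc c k ≤ B) : Feasible n c B A := by
  refine ⟨fun k hk hkn => ?_, fun k hk hkn => ?_, hB⟩
  · rw [hA k hk hkn]
    exact ⟨lt_min one_pos (div_pos hlam (Real.sqrt_pos.2 (rvc_pos hc1 hc hk hkn))),
      min_le_left _ _⟩
  · rw [hA k hk hkn.le, hA (k + 1) (by omega) hkn]
    have := Real.sqrt_pos.2 (rvc_pos hc1 hc hk hkn.le)
    gcongr
    exact rvc_mono hk k.le_succ

lemma mul_rvcAux_le_sum_vc {p r : ℕ} (hpr : p < r) (hrn : r ≤ n) :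
    ((r : ℝ) - p) * rvcAux n c (p + 1) ≤ ∑ j ∈ Ioc p r, vc c j := by
  have hpos : (0 : ℝ) < r - p := sub_pos.2 (by exact_mod_cast hpr)
  have h := rvcAux_le_avg (c := c) hpr hrn
  rwa [avg_succ, le_div_iff₀ hpos, mul_comm] at h

lemma exists_sum_vc_eq_mul_rvcAux {p : ℕ} (hpn : p < n) :
    ∃ r, p < r ∧ r ≤ n ∧ ∑ j ∈ Ioc p r, vc c j = ((r : ℝ) - p) * rvcAux n c (p + 1) := by
  obtain ⟨r, hpr, hrn, h⟩ := exists_rvcAux_eq_avg (c := c) hpn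
  have hpos : (r : ℝ) - p ≠ 0 := (sub_pos.2 (by exact_mod_cast hpr)).ne'
  refine ⟨r, hpr, hrn, ?_⟩
  rw [h, avg_succ, mul_div_cancel₀ _ hpos]

lemma exists_last_record {k : ℕ} (hk : 1 ≤ k) :
    ∃ p < k, (∀ j, 1 ≤ j → j ≤ p → rvcAux n c j < rvcAux n c (p + 1)) ∧
      ∀ j, 1 ≤ j → j ≤ k → rvcAux n c j ≤ rvcAux n c (p + 1) := by
  classical
  have hmax : ∃ l, 1 ≤ l ∧ l ≤ k ∧ ∀ j, 1 ≤ j → j ≤ k → rvcAux n c j ≤ rvcAux n c l := by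
    obtain ⟨l, hl, hmax⟩ := (Icc 1 k).exists_max_image (rvcAux n c) ⟨1, by simp [hk]⟩
    exact ⟨l, (mem_Icc.1 hl).1, (mem_Icc.1 hl).2, fun j hj hjk => hmax j (mem_Icc.2 ⟨hj, hjk⟩)⟩
  obtain ⟨hl1, hlk, hlmax⟩ := Nat.find_spec hmax
  refine ⟨Nat.find hmax - 1, by omega, fun j hj hjp => ?_, by rwa [Nat.sub_add_cancel hl1]⟩
  rw [Nat.sub_add_cancel hl1]
  have hjmin := Nat.find_min hmax (show j < Nat.find hmax by omega)
  push Not at hjmin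
  obtain ⟨i, hi, hik, hlt⟩ := hjmin hj (by omega)
  exact hlt.trans_le (hlmax i hi hik)

lemma sum_rvc_eq_of_record {p k : ℕ} (hpk : p < k)
    (hmax : ∀ j, 1 ≤ j → j ≤ k → rvcAux n c j ≤ rvcAux n c (p + 1)) :
    ∑ j ∈ Ioc 0 k, rvc n c j = ∑ j ∈ Ioc 0 p, rvc n c j + ((k : ℝ) - p) * rvcAux n c (p + 1) := by
  have hflat : ∀ t ∈ Ioc p k, rvc n c t = rvcAux n c (p + 1) := fun t ht =>
    have ht := mem_Ioc.1 ht
    le_antisymm (rvc_le (by omega) fun j hj hjt => hmax j hj (hjt.trans ht.2))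
      (rvcAux_le_rvc (by omega) ht.1)
  rw [← sum_Ioc_consecutive _ (Nat.zero_le p) hpk.le, sum_congr rfl hflat, sum_const,
    Nat.card_Ioc, nsmul_eq_mul, Nat.cast_sub hpk.le]

lemma sum_rvc_le_sum_vc {k : ℕ} (hkn : k ≤ n) :
    ∑ j ∈ Ioc 0 k, rvc n c j ≤ ∑ j ∈ Ioc 0 k, vc c j := by
  induction k using Nat.strong_induction_on with
  | _ k ih =>
    rcases Nat.eq_zero_or_pos k with rfl | hk
    · simp
    obtain ⟨p, hpk, -, hmax⟩ := exists_last_record (n := n) (c := c) hk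
    rw [sum_rvc_eq_of_record hpk hmax, ← sum_Ioc_consecutive _ (Nat.zero_le p) hpk.le]
    exact add_le_add (ih p hpk (by omega)) (mul_rvcAux_le_sum_vc hpk hkn)

/-- The largest minimizer `r` of `avg c (p + 1) ·` is `k`: beyond `k` the averages are too large,
and before `k` a minimizing block starting at `r + 1` could be appended. -/
lemma sum_vc_le_mul_rvcAux {p k : ℕ} (hpk : p < k) (hkn : k ≤ n)
    (hflat : ∀ t, p < t → t ≤ k → rvcAux n c t ≤ rvcAux n c (p + 1))
    (hjump : k < n → rvcAux n c (p + 1) < rvcAux n c (k + 1)) :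
    ∑ j ∈ Ioc p k, vc c j ≤ ((k : ℝ) - p) * rvcAux n c (p + 1) := by
  classical
  set v := rvcAux n c (p + 1)
  set T := (Ioc p n).filter fun r => ∑ j ∈ Ioc p r, vc c j ≤ ((r : ℝ) - p) * v
  have hT : T.Nonempty := by
    obtain ⟨r, hpr, hrn, h⟩ := exists_sum_vc_eq_mul_rvcAux (c := c) (hpk.trans_le hkn)
    exact ⟨r, mem_filter.2 ⟨mem_Ioc.2 ⟨hpr, hrn⟩, h.le⟩⟩
  obtain ⟨r, hrT, hrmax⟩ := T.exists_max_image id hT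
  obtain ⟨⟨hpr, hrn⟩, hr⟩ := And.imp_left mem_Ioc.1 (mem_filter.1 hrT)
  rcases lt_trichotomy r k with hrk | rfl | hkr
  · obtain ⟨r', hrr', hr'n, hr'⟩ := exists_sum_vc_eq_mul_rvcAux (c := c) (hrk.trans_le hkn)
    have hr'v : ∑ j ∈ Ioc r r', vc c j ≤ ((r' : ℝ) - r) * v := by
      rw [hr']
      exact mul_le_mul_of_nonneg_left (hflat (r + 1) (by omega) hrk)
        (sub_nonneg.2 (by exact_mod_cast hrr'.le))
    have hr'T : r' ∈ T := by
      refine mem_filter.2 ⟨mem_Ioc.2 ⟨hpr.trans hrr', hr'n⟩, ?_⟩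
      rw [← sum_Ioc_consecutive _ hpr.le hrr'.le]
      linarith
    exact absurd (hrmax r' hr'T) (not_le.2 hrr')
  · exact hr
  · have hkv : ((k : ℝ) - p) * v ≤ ∑ j ∈ Ioc p k, vc c j := mul_rvcAux_le_sum_vc hpk hkn
    have hrv : ((r : ℝ) - k) * rvcAux n c (k + 1) ≤ ∑ j ∈ Ioc k r, vc c j :=
      mul_rvcAux_le_sum_vc hkr hrn
    have hvv : ((r : ℝ) - k) * v < ((r : ℝ) - k) * rvcAux n c (k + 1) :=
      mul_lt_mul_of_pos_left (hjump (hkr.trans_le hrn)) (sub_pos.2 (by exact_mod_cast hkr))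
    rw [← sum_Ioc_consecutive _ hpk.le hkr.le] at hr
    linarith

lemma sum_vc_le_sum_rvc {k : ℕ} (hkn : k ≤ n)
    (hjump : k < n → ∀ j, 1 ≤ j → j ≤ k → rvcAux n c j < rvcAux n c (k + 1)) :
    ∑ j ∈ Ioc 0 k, vc c j ≤ ∑ j ∈ Ioc 0 k, rvc n c j := by
  induction k using Nat.strong_induction_on with
  | _ k ih =>
    rcases Nat.eq_zero_or_pos k with rfl | hk
    · simp
    obtain ⟨p, hpk, hfirst, hmax⟩ := exists_last_record (n := n) (c := c) hk
    rw [sum_rvc_eq_of_record hpk hmax, ← sum_Ioc_consecutive _ (Nat.zero_le p) hpk.le]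
    refine add_le_add (ih p hpk (by omega) fun _ => hfirst) (sum_vc_le_mul_rvcAux hpk hkn ?_ ?_)
    · exact fun t hpt htk => hmax t (by omega) htk
    · exact fun hkn' => hjump hkn' (p + 1) (by omega) hpk

lemma sum_rvc_eq_sum_vc : ∑ j ∈ Ioc 0 n, rvc n c j = ∑ j ∈ Ioc 0 n, vc c j :=
  le_antisymm (sum_rvc_le_sum_vc le_rfl) (sum_vc_le_sum_rvc le_rfl fun h => absurd h (lt_irrefl n))

lemma rvc_succ_eq_of_sum_lt {k : ℕ} (hk : 1 ≤ k) (hkn : k < n)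
    (hlt : ∑ j ∈ Ioc 0 k, rvc n c j < ∑ j ∈ Ioc 0 k, vc c j) :
    rvc n c (k + 1) = rvc n c k := by
  have hnojump : ¬ ∀ j, 1 ≤ j → j ≤ k → rvcAux n c j < rvcAux n c (k + 1) :=
    fun h => hlt.not_ge (sum_vc_le_sum_rvc hkn.le fun _ => h)
  push Not at hnojump
  obtain ⟨j, hj, hjk, hle⟩ := hnojump
  refine le_antisymm (rvc_le (by omega) fun i hi hik => ?_) (rvc_mono hk k.le_succ)
  rcases (Nat.le_succ_iff.1 hik) with hik | rfl
  · exact rvcAux_le_rvc hi hik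
  · exact hle.trans (rvcAux_le_rvc hj hjk)

lemma sum_mul_vc_sub_sum_mul_rvc (A : ℕ → ℝ) :
    ∑ k ∈ Icc 1 n, A k * vc c k - ∑ k ∈ Icc 1 n, A k * rvc n c k =
      ∑ k ∈ Icc 1 n, (A k - A (k + 1)) *
        (∑ j ∈ Ioc 0 k, vc c j - ∑ j ∈ Ioc 0 k, rvc n c j) := by
  simp only [← sum_sub_distrib, ← mul_sub]
  rw [sum_Icc_one_by_parts, sum_sub_distrib (s := Ioc 0 n), sum_rvc_eq_sum_vc, sub_self,
    mul_zero, add_zero]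

lemma sum_mul_rvc_le_sum_mul_vc (A : ℕ → ℝ) (hA : ∀ k, 1 ≤ k → k < n → A (k + 1) ≤ A k) :
    ∑ k ∈ Icc 1 n, A k * rvc n c k ≤ ∑ k ∈ Icc 1 n, A k * vc c k := by
  rw [← sub_nonneg, sum_mul_vc_sub_sum_mul_rvc]
  refine sum_nonneg fun k hk => ?_
  obtain ⟨hk1, hkn⟩ := mem_Icc.1 hk
  rcases hkn.lt_or_eq with hkn | rfl
  · exact mul_nonneg (sub_nonneg.2 (hA k hk1 hkn)) (sub_nonneg.2 (sum_rvc_le_sum_vc hkn.le))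
  · rw [sum_rvc_eq_sum_vc, sub_self, mul_zero]

lemma sum_mul_rvc_eq_sum_mul_vc (A : ℕ → ℝ)
    (hA : ∀ k, 1 ≤ k → k < n → rvc n c (k + 1) = rvc n c k → A (k + 1) = A k) :
    ∑ k ∈ Icc 1 n, A k * rvc n c k = ∑ k ∈ Icc 1 n, A k * vc c k := by
  rw [eq_comm, ← sub_eq_zero, sum_mul_vc_sub_sum_mul_rvc]
  refine sum_eq_zero fun k hk => ?_
  obtain ⟨hk1, hkn⟩ := mem_Icc.1 hk
  rcases hkn.lt_or_eq with hkn | rfl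
  · rcases (sum_rvc_le_sum_vc (c := c) hkn.le).lt_or_eq with hlt | heq
    · rw [hA k hk1 hkn (rvc_succ_eq_of_sum_lt hk1 hkn hlt), sub_self, zero_mul]
    · rw [heq, sub_self, mul_zero]
  · rw [sum_rvc_eq_sum_vc, sub_self, mul_zero]

end RegularizedVirtualCost

open Finset RegularizedVirtualCost

theorem stmt5_general (n : ℕ) (c : ℕ → ℝ) (hc1 : 0 < c 1)
    (hmono : ∀ i j, i ≤ j → j ≤ n → c i ≤ c j)
    (B : ℝ) (lam : ℝ) (hlam : 0 < lam)
    (Astar : ℕ → ℝ)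
    (hAstar : ∀ k, 1 ≤ k → k ≤ n → Astar k = min 1 (lam / Real.sqrt (rvc n c k)))
    (hbudget : ∑ k ∈ Finset.Icc 1 n, Astar k * vc c k = B) :
    Feasible n c B Astar ∧
      ∀ A : ℕ → ℝ, Feasible n c B A →
        ∑ k ∈ Finset.Icc 1 n, 1 / Astar k ≤ ∑ k ∈ Finset.Icc 1 n, 1 / A k := by
  have hc : ∀ r, 1 ≤ r → r ≤ n → c 1 ≤ c r := fun r hr hrn => hmono 1 r hr hrn
  refine ⟨feasible_min_one_div_sqrt_rvc hc1 hc hlam hAstar hbudget.le,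
    fun A ⟨hA, hA_anti, hA_budget⟩ => ?_⟩
  have hAstar_rvc : ∑ k ∈ Icc 1 n, Astar k * rvc n c k = B := by
    refine (sum_mul_rvc_eq_sum_mul_vc Astar fun k hk hkn h => ?_).trans hbudget
    rw [hAstar k hk hkn.le, hAstar (k + 1) (by omega) hkn, h]
  have hA_rvc : ∑ k ∈ Icc 1 n, A k * rvc n c k ≤ B :=
    (sum_mul_rvc_le_sum_mul_vc A hA_anti).trans hA_budget
  have hlagrangian : ∑ k ∈ Icc 1 n, (1 / Astar k + Astar k * rvc n c k / lam ^ 2) ≤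
      ∑ k ∈ Icc 1 n, (1 / A k + A k * rvc n c k / lam ^ 2) := by
    refine sum_le_sum fun k hk => ?_
    obtain ⟨hk1, hkn⟩ := mem_Icc.1 hk
    rw [hAstar k hk1 hkn]
    exact isMinOn_one_div_add_mul_div_sq hlam (rvc_pos hc1 hc hk1 hkn) (hA k hk1 hkn)
  rw [sum_add_distrib, sum_add_distrib, ← sum_div, ← sum_div, hAstar_rvc] at hlagrangian
  have : (∑ k ∈ Icc 1 n, A k * rvc n c k) / lam ^ 2 ≤ B / lam ^ 2 := by gcongr
  linarith

/-- the allocation `A*_k = min{1, λ/√(φ_k)}` exhausting the budget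
is feasible and minimizes `Σ 1/A_k` over all feasible allocations. -/
theorem stmt5 (n : ℕ) (hn : 1 ≤ n) (c : ℕ → ℝ) (hc0 : c 0 = 0) (hc1 : 0 < c 1)
    (hmono : ∀ i j, i ≤ j → j ≤ n → c i ≤ c j)
    (B : ℝ) (hB : 0 < B) (lam : ℝ) (hlam : 0 < lam)
    (Astar : ℕ → ℝ)
    (hAstar : ∀ k, 1 ≤ k → k ≤ n → Astar k = min 1 (lam / Real.sqrt (rvc n c k)))
    (hbudget : ∑ k ∈ Finset.Icc 1 n, Astar k * vc c k = B) :
    Feasible n c B Astar ∧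
      ∀ A : ℕ → ℝ, Feasible n c B A →
        ∑ k ∈ Finset.Icc 1 n, 1 / Astar k ≤ ∑ k ∈ Finset.Icc 1 n, 1 / A k :=
  stmt5_general n c hc1 hmono B lam hlam Astar hAstar hbudget
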